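/- Let n ≥ 2 be an integer and let x₁, x₂ : ℝ → ℂ satisfy x₁(−t) = e^{−iπ/n}·x₂(t) and x₂(−t) = e^{iπ/n}·x₁(t) for all real t. Define u(t) = π(x₁(t), x₂(t)) ∈ ℝ³. Then u(−t) = M(−1)·u(t) for all real t; in particular M(−1)·u(0) = u(0). -/

import Mathlib

open Real Matrix

/-- The map `π : ℂ × ℂ → ℝ³`,
`π(x₁,x₂) = (|x₁|² − |x₂|², 2 Re(x₁ x̄₂), 2 Im(x₁ x̄₂))`. -/
noncomputable def piMap (x : ℂ × ℂ) : Fin 3 → ℝ :=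
  ![‖x.1‖ ^ 2 - ‖x.2‖ ^ 2,
    2 * (x.1 * (starRingEnd ℂ) x.2).re,
    2 * (x.1 * (starRingEnd ℂ) x.2).im]

/-- The 3×3 real matrix `M(k)` with rows `(−1,0,0)`, `(0, cos(2πk/n), sin(2πk/n))`,
`(0, sin(2πk/n), −cos(2πk/n))`. -/
noncomputable def Mmat (n : ℕ) (k : ℤ) : Matrix (Fin 3) (Fin 3) ℝ :=
  !![-1, 0, 0;
     0, Real.cos (2 * π * k / n), Real.sin (2 * π * k / n);
     0, Real.sin (2 * π * k / n), -Real.cos (2 * π * k / n)]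

/-
Swapping the two coordinates and rotating them by opposite phases `e^{∓iθ}` flips the
sign of `|x₁|² − |x₂|²` and sends `w = x₁ x̄₂` to `e^{−2iθ} w̄`; in coordinates this is the
reflection matrix at angle `−2θ`, which for `θ = π/n` is `M(−1)`.
-/

noncomputable def reflectionMatrix (φ : ℝ) : Matrix (Fin 3) (Fin 3) ℝ :=
  !![-1, 0, 0;
     0, Real.cos φ, Real.sin φ;
     0, Real.sin φ, -Real.cos φ]

lemma Mmat_eq_reflectionMatrix (n : ℕ) (k : ℤ) :
    Mmat n k = reflectionMatrix (2 * π * k / n) := rfl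

lemma reflectionMatrix_mulVec (φ : ℝ) (v : Fin 3 → ℝ) :
    (reflectionMatrix φ).mulVec v =
      ![-v 0, Real.cos φ * v 1 + Real.sin φ * v 2, Real.sin φ * v 1 - Real.cos φ * v 2] := by
  ext i
  fin_cases i <;> simp [reflectionMatrix, mulVec, dotProduct, Fin.sum_univ_three]; ring

lemma re_exp_mul_I_mul_conj (φ : ℝ) (w : ℂ) :
    (Complex.exp (φ * Complex.I) * (starRingEnd ℂ) w).re =
      Real.cos φ * w.re + Real.sin φ * w.im := by
  rw [Complex.exp_mul_I]
  simp [Complex.mul_re, ← Complex.ofReal_cos, ← Complex.ofReal_sin]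

lemma im_exp_mul_I_mul_conj (φ : ℝ) (w : ℂ) :
    (Complex.exp (φ * Complex.I) * (starRingEnd ℂ) w).im =
      Real.sin φ * w.re - Real.cos φ * w.im := by
  rw [Complex.exp_mul_I]
  simp [Complex.mul_im, ← Complex.ofReal_cos, ← Complex.ofReal_sin]
  ring

lemma mul_conj_swap_mul_exp (θ : ℝ) (a b : ℂ) :
    Complex.exp (-θ * Complex.I) * b * (starRingEnd ℂ) (Complex.exp (θ * Complex.I) * a) =
      Complex.exp (↑(-2 * θ) * Complex.I) * (starRingEnd ℂ) (a * (starRingEnd ℂ) b) := by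
  have hexp : Complex.exp (↑(-2 * θ) * Complex.I) =
      Complex.exp (-θ * Complex.I) * Complex.exp (θ * -Complex.I) := by
    rw [← Complex.exp_add]; push_cast; ring_nf
  rw [hexp, map_mul, map_mul, Complex.conj_conj, ← Complex.exp_conj, map_mul, Complex.conj_ofReal,
    Complex.conj_I]
  ring

lemma piMap_swap_mul_exp (θ : ℝ) (a b : ℂ) :
    piMap (Complex.exp (-θ * Complex.I) * b, Complex.exp (θ * Complex.I) * a) =
      (reflectionMatrix (-2 * θ)).mulVec (piMap (a, b)) := by
  have hnorm : ‖Complex.exp (-θ * Complex.I)‖ = 1 := by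
    rw [← Complex.ofReal_neg, Complex.norm_exp_ofReal_mul_I]
  simp only [piMap]
  rw [mul_conj_swap_mul_exp, re_exp_mul_I_mul_conj, im_exp_mul_I_mul_conj, norm_mul,
    norm_mul, hnorm, Complex.norm_exp_ofReal_mul_I, reflectionMatrix_mulVec]
  ext i
  fin_cases i <;> simp <;> ring

theorem shape_curve_symmetry_general (n : ℕ) (x₁ x₂ : ℝ → ℂ)
    (h₁ : ∀ t : ℝ, x₁ (-t) = Complex.exp (-(π : ℂ) * Complex.I / (n : ℂ)) * x₂ t)
    (h₂ : ∀ t : ℝ, x₂ (-t) = Complex.exp ((π : ℂ) * Complex.I / (n : ℂ)) * x₁ t)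
    (u : ℝ → Fin 3 → ℝ) (hu : ∀ t : ℝ, u t = piMap (x₁ t, x₂ t)) :
    (∀ t : ℝ, u (-t) = (Mmat n (-1)).mulVec (u t)) ∧
    (Mmat n (-1)).mulVec (u 0) = u 0 := by
  have hphase : (π : ℂ) * Complex.I / n = ((π / n : ℝ) : ℂ) * Complex.I := by
    push_cast; ring
  have hM : Mmat n (-1) = reflectionMatrix (-2 * (π / n)) := by
    rw [Mmat_eq_reflectionMatrix]; congr 1; push_cast; ring
  have hsymm : ∀ t : ℝ, u (-t) = (Mmat n (-1)).mulVec (u t) := by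
    intro t
    rw [hu, hu, h₁, h₂, neg_mul, neg_div, hphase, ← neg_mul, hM, piMap_swap_mul_exp]
  refine ⟨hsymm, ?_⟩
  simpa using (hsymm 0).symm

/-- If `x₁(−t) = e^{−iπ/n}x₂(t)` and `x₂(−t) = e^{iπ/n}x₁(t)` for all `t`, then the
shape curve `u(t) = π(x₁(t), x₂(t))` satisfies `u(−t) = M(−1)·u(t)`; in particular
`M(−1)·u(0) = u(0)`. -/
theorem shape_curve_symmetry (n : ℕ) (hn : 2 ≤ n) (x₁ x₂ : ℝ → ℂ)
    (h₁ : ∀ t : ℝ, x₁ (-t) = Complex.exp (-(π : ℂ) * Complex.I / (n : ℂ)) * x₂ t)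
    (h₂ : ∀ t : ℝ, x₂ (-t) = Complex.exp ((π : ℂ) * Complex.I / (n : ℂ)) * x₁ t)
    (u : ℝ → Fin 3 → ℝ) (hu : ∀ t : ℝ, u t = piMap (x₁ t, x₂ t)) :
    (∀ t : ℝ, u (-t) = (Mmat n (-1)).mulVec (u t)) ∧
    (Mmat n (-1)).mulVec (u 0) = u 0 :=
  shape_curve_symmetry_general n x₁ x₂ h₁ h₂ u hu
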